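/- For every r>0 and every ζ=(η,ℓ) ∈ ℝ²×ℝ with η ≠ 0, there exist ζ₁=(ξ₁,τ₁) and ζ₂=(ξ₂,τ₂) in ℂ²×ℝ such that for j=1,2: |Im ξ_j| = r, τ_j = ξ_j·ξ_j, Re ξ_j · Im ξ_j = 0, and ζ₁ − conj(ζ₂) = ζ (i.e., ξ₁ − conj(ξ₂) = η as vectors in ℂ² and τ₁ − τ₂ = ℓ). Moreover one can choose them so that |ξ_j| ≤ (1/2)(|η| + |ℓ|/|η|) + r and |τ_j| ≤ |η|² + ℓ²/|η|² + 2r². -/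

import Mathlib

open Real

/-- Euclidean norm of a real vector in `ℝ²`. -/
noncomputable def nE (η : Fin 2 → ℝ) : ℝ := Real.sqrt (∑ i, (η i) ^ 2)

/-- Euclidean norm of a complex vector in `ℂ²`. -/
noncomputable def nC (ξ : Fin 2 → ℂ) : ℝ := Real.sqrt (∑ i, ‖ξ i‖ ^ 2)

/-- The conditions satisfied by each pair `(ξ_j, τ_j)` in Lemma 5.1:
`|Im ξ| = r`, `τ = ξ·ξ` (bilinear dot product), `Re ξ · Im ξ = 0`, together with the
size estimates `|ξ| ≤ (1/2)(|η| + |ℓ|/|η|) + r` and `|τ| ≤ |η|² + ℓ²/|η|² + 2r²`. -/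
def GoodPair (r ℓ : ℝ) (η : Fin 2 → ℝ) (ξ : Fin 2 → ℂ) (τ : ℝ) : Prop :=
  Real.sqrt (∑ i, (ξ i).im ^ 2) = r ∧
  (τ : ℂ) = ∑ i, (ξ i) ^ 2 ∧
  (∑ i, (ξ i).re * (ξ i).im) = 0 ∧
  nC ξ ≤ (1 / 2) * (nE η + |ℓ| / nE η) + r ∧
  |τ| ≤ (nE η) ^ 2 + ℓ ^ 2 / (nE η) ^ 2 + 2 * r ^ 2

/-!
Take `ξ = c η + i s η^⊥` with `η^⊥` the rotation of `η` by a right angle. Since `η ⊥ η^⊥`,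
`Re ξ · Im ξ = 0`, `ξ · ξ = (c² - s²)|η|²` is real and `|Im ξ| = |s| |η|`. Choosing
`s = ∓ r/|η|` and `c = (ℓ/|η|² ± 1)/2` for the two vectors makes `ξ₁ - conj ξ₂ = η` and
`τ₁ - τ₂ = (c₁² - c₂²)|η|² = ℓ`; the size estimates follow from `c² ≤ (1 + ℓ²/|η|⁴)/2`.
-/

section ComplexSums

variable {ι : Type*} [Fintype ι] (u v : ι → ℝ)

theorem Complex.sum_mk_sq :
    ∑ i, (⟨u i, v i⟩ : ℂ) ^ 2 = ⟨∑ i, (u i ^ 2 - v i ^ 2), 2 * ∑ i, u i * v i⟩ := by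
  apply Complex.ext
  · simp [Complex.re_sum, sq]
  · simp only [Complex.im_sum, sq, Finset.mul_sum, Complex.mul_im]
    exact Finset.sum_congr rfl fun i _ => by ring

theorem Complex.sum_norm_mk_sq :
    ∑ i, ‖(⟨u i, v i⟩ : ℂ)‖ ^ 2 = ∑ i, u i ^ 2 + ∑ i, v i ^ 2 := by
  simp [Complex.sq_norm, Complex.normSq_mk, ← sq, Finset.sum_add_distrib]

end ComplexSums

def rot (η : Fin 2 → ℝ) : Fin 2 → ℝ := ![-η 1, η 0]

theorem nE_sq (η : Fin 2 → ℝ) : nE η ^ 2 = ∑ i, η i ^ 2 :=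
  Real.sq_sqrt (by positivity)

theorem nE_pos {η : Fin 2 → ℝ} (hη : η ≠ 0) : 0 < nE η := by
  obtain ⟨i, hi⟩ := Function.ne_iff.mp hη
  exact Real.sqrt_pos.mpr <|
    Finset.sum_pos' (fun j _ => sq_nonneg _) ⟨i, Finset.mem_univ i, sq_pos_of_ne_zero hi⟩

theorem sum_rot_sq (η : Fin 2 → ℝ) : ∑ i, rot η i ^ 2 = nE η ^ 2 := by
  simp [nE_sq, rot, Fin.sum_univ_two, add_comm]

theorem sum_mul_rot (η : Fin 2 → ℝ) : ∑ i, η i * rot η i = 0 := by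
  simp [rot, Fin.sum_univ_two, mul_comm]

def modeVector (c s : ℝ) (η : Fin 2 → ℝ) : Fin 2 → ℂ := fun i => ⟨c * η i, s * rot η i⟩

theorem sum_modeVector_im_sq (c s : ℝ) (η : Fin 2 → ℝ) :
    ∑ i, (modeVector c s η i).im ^ 2 = s ^ 2 * nE η ^ 2 := by
  simp only [modeVector, mul_pow, ← Finset.mul_sum]
  rw [sum_rot_sq]

theorem sum_modeVector_re_mul_im (c s : ℝ) (η : Fin 2 → ℝ) :
    ∑ i, (modeVector c s η i).re * (modeVector c s η i).im = 0 := by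
  calc ∑ i, (modeVector c s η i).re * (modeVector c s η i).im
      = c * s * ∑ i, η i * rot η i := by
        simp only [modeVector, Finset.mul_sum]; congr 1; ext; ring
    _ = 0 := by rw [sum_mul_rot, mul_zero]

theorem sum_modeVector_sq (c s : ℝ) (η : Fin 2 → ℝ) :
    ∑ i, modeVector c s η i ^ 2 = Complex.ofReal ((c ^ 2 - s ^ 2) * nE η ^ 2) := by
  have h := sum_modeVector_re_mul_im c s η
  simp only [modeVector] at h ⊢
  rw [Complex.sum_mk_sq, h, mul_zero]
  apply Complex.ext
  · simp only [Complex.ofReal_re, mul_pow, Finset.sum_sub_distrib, ← Finset.mul_sum, nE_sq,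
      sum_rot_sq]
    ring
  · rw [Complex.ofReal_im]

theorem nC_modeVector_sq (c s : ℝ) (η : Fin 2 → ℝ) :
    nC (modeVector c s η) ^ 2 = (c ^ 2 + s ^ 2) * nE η ^ 2 := by
  rw [nC, Real.sq_sqrt (by positivity)]
  simp only [modeVector]
  rw [Complex.sum_norm_mk_sq]
  simp only [mul_pow, ← Finset.mul_sum, sum_rot_sq, nE_sq]
  ring

theorem goodPair_modeVector {r ℓ c s : ℝ} {η : Fin 2 → ℝ} (hr : 0 ≤ r) (hs : |s| * nE η = r)
    (hc_abs : |c| * nE η ≤ (1 / 2) * (nE η + |ℓ| / nE η))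
    (hc_sq : c ^ 2 * nE η ^ 2 ≤ nE η ^ 2 + ℓ ^ 2 / nE η ^ 2) :
    GoodPair r ℓ η (modeVector c s η) (c ^ 2 * nE η ^ 2 - r ^ 2) := by
  have hn : 0 ≤ nE η := Real.sqrt_nonneg _
  have hs_sq : s ^ 2 * nE η ^ 2 = r ^ 2 := by rw [← hs, mul_pow, sq_abs]
  refine ⟨?_, ?_, sum_modeVector_re_mul_im c s η, ?_, ?_⟩
  · rw [sum_modeVector_im_sq, hs_sq, Real.sqrt_sq hr]
  · rw [sum_modeVector_sq, sub_mul, hs_sq]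
  · have : nC (modeVector c s η) ≤ |c| * nE η + r := by
      refine (pow_le_pow_iff_left₀ (Real.sqrt_nonneg _) (by positivity) two_ne_zero).mp ?_
      rw [← nC, nC_modeVector_sq]
      nlinarith [sq_abs c, mul_nonneg (mul_nonneg (abs_nonneg c) hn) hr]
    linarith
  · rw [abs_le]
    constructor <;> nlinarith [sq_nonneg r, div_nonneg (sq_nonneg ℓ) (sq_nonneg (nE η)),
      mul_nonneg (sq_nonneg c) (sq_nonneg (nE η))]

theorem abs_half_add_le_of_abs_eq_one {a ε : ℝ} (hε : |ε| = 1) :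
    |(a + ε) / 2| ≤ (1 + |a|) / 2 := by
  rw [abs_div, abs_two]
  linarith [abs_add_le a ε]

theorem half_add_sq_le_of_abs_eq_one {a ε : ℝ} (hε : |ε| = 1) :
    ((a + ε) / 2) ^ 2 ≤ (1 + a ^ 2) / 2 := by
  have hε_sq : ε ^ 2 = 1 := by rw [← sq_abs, hε, one_pow]
  nlinarith [sq_nonneg (a - ε)]

/-- With `ε = (-1)^(j+1)` these are the paper's `ξ_j`, `τ_j` for `η^⊥ = rot η`. -/
theorem goodPair_modeVector_sign {r ℓ ε : ℝ} {η : Fin 2 → ℝ} (hr : 0 ≤ r) (hη : η ≠ 0)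
    (hε : |ε| = 1) :
    GoodPair r ℓ η (modeVector ((ℓ / nE η ^ 2 + ε) / 2) (-ε * r / nE η) η)
      (((ℓ / nE η ^ 2 + ε) / 2) ^ 2 * nE η ^ 2 - r ^ 2) := by
  have hn := nE_pos hη
  set c := (ℓ / nE η ^ 2 + ε) / 2
  refine goodPair_modeVector hr ?_ ?_ ?_
  · rw [abs_div, abs_mul, abs_neg, hε, one_mul, abs_of_nonneg hr, abs_of_pos hn,
      div_mul_cancel₀ r hn.ne']
  · calc |c| * nE η ≤ (1 + |ℓ / nE η ^ 2|) / 2 * nE η := by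
          gcongr; exact abs_half_add_le_of_abs_eq_one hε
      _ = 1 / 2 * (nE η + |ℓ| / nE η) := by
          rw [abs_div, abs_of_pos (pow_pos hn 2)]; field_simp
  · calc c ^ 2 * nE η ^ 2 ≤ (1 + (ℓ / nE η ^ 2) ^ 2) / 2 * nE η ^ 2 := by
          gcongr; exact half_add_sq_le_of_abs_eq_one hε
      _ ≤ nE η ^ 2 + ℓ ^ 2 / nE η ^ 2 := by
          have : (ℓ / nE η ^ 2) ^ 2 * nE η ^ 2 = ℓ ^ 2 / nE η ^ 2 := by field_simp
          nlinarith [div_nonneg (sq_nonneg ℓ) (sq_nonneg (nE η))]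

theorem stmt0 (r : ℝ) (hr : 0 < r) (η : Fin 2 → ℝ) (hη : η ≠ 0) (ℓ : ℝ) :
    ∃ (ξ₁ ξ₂ : Fin 2 → ℂ) (τ₁ τ₂ : ℝ),
      (∀ i, ξ₁ i - (starRingEnd ℂ) (ξ₂ i) = (η i : ℂ)) ∧
      τ₁ - τ₂ = ℓ ∧
      GoodPair r ℓ η ξ₁ τ₁ ∧ GoodPair r ℓ η ξ₂ τ₂ := by
  have hn := nE_pos hη
  refine ⟨_, _, _, _, fun i => ?_, ?_, goodPair_modeVector_sign (ε := 1) hr.le hη abs_one,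
    goodPair_modeVector_sign (ε := -1) hr.le hη (by norm_num)⟩
  · apply Complex.ext <;> simp [modeVector] <;> ring
  · field_simp
    ring
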